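/- Let n ≥ 1 and let v, q : Fin n → ℝ be positive antitone sequences, and let p* : Fin n → ℝ be the recursively defined envy-free prices. Then p* pointwise dominates every envy-free price vector for the identity allocation: if p : Fin n → ℝ satisfies p i ≤ v i * q i for all i and v i * q i - p i ≥ v i * q j - p j for all i, j, then p i ≤ p* i for every i. -/
import Mathlib


/-- Maximum of `f i` over indices `i > k`, well defined when `(k : ℕ) < n - 1`. -/
noncomputable def maxAbove {n : ℕ} (k : Fin n) (hk : (k : ℕ) < n - 1) (f : Fin n → ℝ) : ℝ :=
  (Finset.univ.filter fun i => k < i).sup'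
    ⟨⟨(k : ℕ) + 1, by omega⟩, by
      simp only [Finset.mem_filter, Finset.mem_univ, true_and, Fin.lt_def]
      omega⟩ f

/-- The recursively defined prices `p*` pointwise dominate every envy-free
price vector for the identity allocation. -/
theorem pstar_pointwise_dominates (n : ℕ) (hn : 1 ≤ n) (v q : Fin n → ℝ)
    (hvpos : ∀ i, 0 < v i) (hqpos : ∀ i, 0 < q i)
    (hv : Antitone v) (hq : Antitone q)
    (pstar : Fin n → ℝ)
    (hlast : pstar ⟨n - 1, by omega⟩ = v ⟨n - 1, by omega⟩ * q ⟨n - 1, by omega⟩)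
    (hrec : ∀ (k : Fin n) (hk : (k : ℕ) < n - 1),
      pstar k = v k * q k - maxAbove k hk (fun i => v k * q i - pstar i)) :
    ∀ p : Fin n → ℝ,
      (∀ i, p i ≤ v i * q i) →
      (∀ i j : Fin n, v i * q i - p i ≥ v i * q j - p j) →
      ∀ i, p i ≤ pstar i := by
  intro p hle henvy
  suffices H : ∀ m (i : Fin n), n - 1 - (i : ℕ) = m → p i ≤ pstar i from fun i => H _ i rfl
  intro m
  induction m using Nat.strong_induction_on with
  | _ m ih =>
    intro i hm
    by_cases h : (i : ℕ) < n - 1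
    · rw [hrec i h]
      unfold maxAbove
      obtain ⟨j, hj, hsup⟩ := Finset.exists_mem_eq_sup'
        (⟨⟨(i : ℕ) + 1, by omega⟩, by
          simp only [Finset.mem_filter, Finset.mem_univ, true_and, Fin.lt_def]
          omega⟩ : (Finset.univ.filter fun i' => i < i').Nonempty)
        (fun i' => v i * q i' - pstar i')
      rw [hsup]
      simp only [Finset.mem_filter, Finset.mem_univ, true_and] at hj
      have hij : (i : ℕ) < (j : ℕ) := hj
      have hpj : p j ≤ pstar j := ih (n - 1 - (j : ℕ)) (by omega) j rfl
      have := henvy i j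
      
      linarith
    · have hi : i = ⟨n - 1, by omega⟩ := Fin.ext (by have := i.isLt; simp only []; omega)
      rw [hi, hlast]
      exact hle _
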